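/- Let σ be an element preceding a Coxeter element γ in the reflection-length order on a finite real reflection group W acting on ℝ^n, let τ be a positive root with R(τ) ≤ σ, and let μ'(τ) denote the orthogonal projection of μ(τ) = -2(γ-I)⁻¹τ onto M(σ). Then μ'(τ) lies in the fixed space of R(τ)σ, and consequently σ(μ'(τ)) = R(τ)(μ'(τ)) = μ'(τ) - 2τ. -/

import Mathlib

/-!
For an isometry `g` one has `M(g) = F(g)ᗮ`, and `dim M(g) ≤ ℓ(g)` because a product of `k`
reflections moves at most a `k`-dimensional subspace. The Coxeter element fixes no nonzero vector,
so `dim M(γ) = n ≥ ℓ(γ)`; along the chain `R(τ) ≤ σ ≤ γ` all these inequalities then become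
equalities, and `dim M(a) + dim M(b) = dim M(ab)` forces `F(ab) = F(a) ⊓ F(b)`. This yields
`F(σ) ≤ F(R(τ)σ)` and `F(R(τ)γ) ≤ F(R(τ)σ)`. Now `γμ = μ - 2τ` gives `⟪τ, μ⟫ = ‖τ‖²`, i.e.
`R(τ)μ = γμ`, so `μ ∈ F(R(τ)γ)`; and `μ - μ' ∈ M(σ)ᗮ = F(σ)`. Hence `μ' ∈ F(R(τ)σ)`. Finally
`τ ∈ M(R(τ)) ≤ M(σ)`, so `⟪τ, μ'⟫ = ⟪τ, μ⟫` and `R(τ)μ' = μ' - 2τ`.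
-/

noncomputable section
open scoped RealInnerProductSpace

abbrev Euc (n : ℕ) := EuclideanSpace ℝ (Fin n)

/-- Reflection length: the minimal number of elements of `R` needed to express `g`. -/
def reflLength {G : Type*} [Group G] (R : Set G) (g : G) : ℕ :=
  sInf {k | ∃ l : List G, (∀ x ∈ l, x ∈ R) ∧ l.length = k ∧ l.prod = g}

/-- The partial order induced by reflection length: `u ≤ w` iff `ℓ(w) = ℓ(u) + ℓ(u⁻¹w)`. -/
def reflLe {G : Type*} [Group G] (R : Set G) (u w : G) : Prop :=
  reflLength R w = reflLength R u + reflLength R (u⁻¹ * w)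

/-- The simple reflection in the hyperplane orthogonal to the simple root `α i`. -/
def simpleRefl {n : ℕ} (α : Fin n → Euc n) (i : Fin n) : Euc n ≃ₗᵢ[ℝ] Euc n :=
  Submodule.reflection (ℝ ∙ (α i))ᗮ

/-- The Coxeter element `γ = R₁ R₂ ⋯ Rₙ`. -/
def coxeterElt {n : ℕ} (α : Fin n → Euc n) : Euc n ≃ₗᵢ[ℝ] Euc n :=
  (List.ofFn (simpleRefl α)).prod

/-- The reflection group `W` generated by the simple reflections. -/
def reflGroup {n : ℕ} (α : Fin n → Euc n) : Subgroup (Euc n ≃ₗᵢ[ℝ] Euc n) :=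
  Subgroup.closure (Set.range (simpleRefl α))

/-- The set of all reflections of `W`. -/
def reflections {n : ℕ} (α : Fin n → Euc n) : Set (Euc n ≃ₗᵢ[ℝ] Euc n) :=
  {r | r ∈ reflGroup α ∧ ∃ v : Euc n, v ≠ 0 ∧ r = Submodule.reflection (ℝ ∙ v)ᗮ}

/-- Steinberg's roots `ρ_j` (0-indexed): `ρ_j = R₁⋯R_{j} α_{j+1}` for `j < n`, extended
cyclically by `ρ_{j+n} = γ ρ_j`. -/
def steinbergRoot {n : ℕ} [NeZero n] (α : Fin n → Euc n) (j : ℕ) : Euc n :=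
  ((coxeterElt α) ^ (j / n))
    (((List.ofFn (simpleRefl α)).take (j % n)).prod
      (α ⟨j % n, Nat.mod_lt j (Nat.pos_of_ne_zero (NeZero.ne n))⟩))

/-- The moved space `M(A) = range (A - I)`. -/
def movedSpace {n : ℕ} (A : Euc n ≃ₗᵢ[ℝ] Euc n) : Submodule ℝ (Euc n) :=
  LinearMap.range (A.toLinearEquiv.toLinearMap - LinearMap.id)

open Submodule Module

variable {n : ℕ}

def fixedSpace (A : Euc n ≃ₗᵢ[ℝ] Euc n) : Submodule ℝ (Euc n) :=
  LinearMap.ker (A.toLinearEquiv.toLinearMap - LinearMap.id)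

section MovedSpace

variable {A B : Euc n ≃ₗᵢ[ℝ] Euc n}

lemma mem_fixedSpace {x : Euc n} : x ∈ fixedSpace A ↔ A x = x := by
  simp [fixedSpace, sub_eq_zero]

lemma apply_sub_mem_movedSpace (x : Euc n) : A x - x ∈ movedSpace A :=
  ⟨x, rfl⟩

lemma orthogonal_movedSpace : (movedSpace A)ᗮ = fixedSpace A := by
  ext x
  have key : (∀ y, ⟪A y - y, x⟫ = 0) ↔ A.symm x = x := by
    simp only [inner_sub_left, A.inner_map_eq_flip, sub_eq_zero]
    exact ⟨ext_inner_left ℝ, fun h y => by rw [h]⟩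
  simp only [mem_orthogonal, movedSpace, LinearMap.mem_range, forall_exists_index,
    forall_apply_eq_imp_iff]
  exact key.trans (by rw [mem_fixedSpace, A.symm_apply_eq, eq_comm])

lemma movedSpace_eq_orthogonal_fixedSpace : movedSpace A = (fixedSpace A)ᗮ := by
  rw [← orthogonal_movedSpace, orthogonal_orthogonal]

lemma movedSpace_le_movedSpace_of_fixedSpace_le (h : fixedSpace A ≤ fixedSpace B) :
    movedSpace B ≤ movedSpace A := by
  rw [movedSpace_eq_orthogonal_fixedSpace, movedSpace_eq_orthogonal_fixedSpace]
  exact orthogonal_le h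

lemma finrank_fixedSpace_add_finrank_movedSpace :
    finrank ℝ (fixedSpace A) + finrank ℝ (movedSpace A) = n := by
  rw [movedSpace_eq_orthogonal_fixedSpace, finrank_add_finrank_orthogonal,
    finrank_euclideanSpace_fin]

lemma movedSpace_reflection (v : Euc n) : movedSpace (reflection (ℝ ∙ v)ᗮ) = ℝ ∙ v := by
  have : fixedSpace (reflection (ℝ ∙ v)ᗮ) = (ℝ ∙ v)ᗮ := by
    ext x; rw [mem_fixedSpace, reflection_eq_self_iff]
  rw [movedSpace_eq_orthogonal_fixedSpace, this, orthogonal_orthogonal]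

lemma finrank_movedSpace_reflection_le (v : Euc n) :
    finrank ℝ (movedSpace (reflection (ℝ ∙ v)ᗮ)) ≤ 1 := by
  rw [movedSpace_reflection]
  simpa using finrank_span_le_card ({v} : Set (Euc n))

lemma movedSpace_mul_le : movedSpace (A * B) ≤ movedSpace A ⊔ movedSpace B := by
  rintro _ ⟨x, rfl⟩
  change A (B x) - x ∈ _
  have : A (B x) - x = (A (B x) - B x) + (B x - x) := by abel
  exact this ▸ add_mem_sup (apply_sub_mem_movedSpace (B x)) (apply_sub_mem_movedSpace x)

lemma finrank_movedSpace_mul_le :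
    finrank ℝ (movedSpace (A * B)) ≤ finrank ℝ (movedSpace A) + finrank ℝ (movedSpace B) :=
  (finrank_mono movedSpace_mul_le).trans (finrank_add_le_finrank_add_finrank _ _)

lemma fixedSpace_mul_eq_inf_of_finrank_le
    (h : finrank ℝ (movedSpace A) + finrank ℝ (movedSpace B) ≤ finrank ℝ (movedSpace (A * B))) :
    fixedSpace (A * B) = fixedSpace A ⊓ fixedSpace B := by
  have hle : fixedSpace A ⊓ fixedSpace B ≤ fixedSpace (A * B) := fun x hx => by
    rw [mem_inf, mem_fixedSpace, mem_fixedSpace] at hx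
    rw [mem_fixedSpace, LinearIsometryEquiv.coe_mul, Function.comp_apply, hx.2, hx.1]
  refine (eq_of_le_of_finrank_le hle ?_).symm
  have := finrank_sup_add_finrank_inf_eq (fixedSpace A) (fixedSpace B)
  have := finrank_le (fixedSpace A ⊔ fixedSpace B)
  have := @finrank_fixedSpace_add_finrank_movedSpace n A
  have := @finrank_fixedSpace_add_finrank_movedSpace n B
  have := @finrank_fixedSpace_add_finrank_movedSpace n (A * B)
  rw [finrank_euclideanSpace_fin] at *
  omega

end MovedSpace

section Reflection

variable {E : Type*} [NormedAddCommGroup E] [InnerProductSpace ℝ E]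

lemma inner_eq_norm_sq_of_norm_sub_two_smul_eq {x τ : E} (h : ‖x - (2 : ℝ) • τ‖ = ‖x‖) :
    ⟪τ, x⟫ = ‖τ‖ ^ 2 := by
  have h2 := congrArg (· ^ 2) h
  simp only [norm_sub_sq_real, inner_smul_right, norm_smul, mul_pow, Real.norm_ofNat] at h2
  rw [real_inner_comm]
  linarith

lemma reflection_orthogonal_span_apply_of_inner_eq {x τ : E} (h : ⟪τ, x⟫ = ‖τ‖ ^ 2) :
    reflection (ℝ ∙ τ)ᗮ x = x - (2 : ℝ) • τ := by
  rcases eq_or_ne τ 0 with rfl | hτ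
  · simp [reflection_eq_self_iff]
  have hτ2 : ‖τ‖ ^ 2 ≠ 0 := by positivity
  rw [reflection_orthogonal_apply, reflection_singleton_apply, h]
  simp only [RCLike.ofReal_real_eq_id, id, div_self hτ2, one_smul]
  module

lemma reflection_orthogonal_span_map (w : E ≃ₗᵢ[ℝ] E) (v : E) :
    reflection (ℝ ∙ w v)ᗮ = w * reflection (ℝ ∙ v)ᗮ * w⁻¹ := by
  have : (ℝ ∙ w v)ᗮ = ((ℝ ∙ v)ᗮ).map (w.toLinearEquiv : E →ₗ[ℝ] E) := by
    rw [map_orthogonal_equiv, map_span, Set.image_singleton]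
    rfl
  simp only [this, reflection_map]
  rfl

lemma reflection_orthogonal_span_starProjection {K : Submodule ℝ E} [K.HasOrthogonalProjection]
    {x τ : E} (hτ : τ ∈ K) (h : ⟪τ, x⟫ = ‖τ‖ ^ 2) :
    reflection (ℝ ∙ τ)ᗮ (K.starProjection x) = K.starProjection x - (2 : ℝ) • τ := by
  refine reflection_orthogonal_span_apply_of_inner_eq ?_
  rw [← h, ← inner_starProjection_left_eq_right, starProjection_eq_self_iff.mpr hτ]

end Reflection

lemma mem_fixedSpace_reflection_inv_mul {γ : Euc n ≃ₗᵢ[ℝ] Euc n} {μ τ : Euc n}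
    (hμ : γ μ = μ - (2 : ℝ) • τ) : μ ∈ fixedSpace ((reflection (ℝ ∙ τ)ᗮ)⁻¹ * γ) := by
  have hinner := inner_eq_norm_sq_of_norm_sub_two_smul_eq (hμ ▸ γ.norm_map μ)
  rw [mem_fixedSpace, Submodule.reflection_inv, LinearIsometryEquiv.coe_mul, Function.comp_apply,
    hμ, ← reflection_orthogonal_span_apply_of_inner_eq hinner, reflection_reflection]

lemma starProjection_movedSpace_mem_fixedSpace {σ ρ : Euc n ≃ₗᵢ[ℝ] Euc n}
    (hσρ : fixedSpace σ ≤ fixedSpace ρ) {μ : Euc n} (hμ : μ ∈ fixedSpace ρ) :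
    (movedSpace σ).starProjection μ ∈ fixedSpace ρ := by
  have hperp : μ - (movedSpace σ).starProjection μ ∈ fixedSpace σ :=
    orthogonal_movedSpace ▸ sub_starProjection_mem_orthogonal μ
  simpa using sub_mem hμ (hσρ hperp)

section ReflLength

variable {R : Set (Euc n ≃ₗᵢ[ℝ] Euc n)}

lemma reflLength_list_prod_le {l : List (Euc n ≃ₗᵢ[ℝ] Euc n)} (hl : ∀ r ∈ l, r ∈ R) :
    reflLength R l.prod ≤ l.length :=
  Nat.sInf_le ⟨l, hl, rfl, rfl⟩

lemma finrank_movedSpace_list_prod_le {l : List (Euc n ≃ₗᵢ[ℝ] Euc n)}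
    (hl : ∀ r ∈ l, finrank ℝ (movedSpace r) ≤ 1) :
    finrank ℝ (movedSpace l.prod) ≤ l.length := by
  induction l with
  | nil =>
    have : movedSpace (1 : Euc n ≃ₗᵢ[ℝ] Euc n) = ⊥ := by
      rw [eq_bot_iff]
      rintro _ ⟨x, rfl⟩
      exact sub_self x
    rw [List.prod_nil, this, finrank_bot]
    exact Nat.zero_le _
  | cons r t ih =>
    have hr := hl r List.mem_cons_self
    have ht := ih fun x hx => hl x (List.mem_cons_of_mem r hx)
    have := @finrank_movedSpace_mul_le n r t.prod
    rw [List.prod_cons, List.length_cons]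
    omega

lemma finrank_movedSpace_le_reflLength (hR : ∀ r ∈ R, finrank ℝ (movedSpace r) ≤ 1)
    {g : Euc n ≃ₗᵢ[ℝ] Euc n} (hg : g ∈ Submonoid.closure R) :
    finrank ℝ (movedSpace g) ≤ reflLength R g := by
  obtain ⟨l, hlR, rfl⟩ := Submonoid.exists_list_of_mem_closure hg
  have hne : {k | ∃ l' : List (Euc n ≃ₗᵢ[ℝ] Euc n),
      (∀ x ∈ l', x ∈ R) ∧ l'.length = k ∧ l'.prod = l.prod}.Nonempty :=
    ⟨l.length, l, hlR, rfl, rfl⟩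
  obtain ⟨l', hl'R, hlen, hprod⟩ := Nat.sInf_mem hne
  rw [reflLength, ← hlen, ← hprod]
  exact finrank_movedSpace_list_prod_le fun r hr => hR r (hl'R r hr)

end ReflLength

section RootSystem

variable {α : Fin n → Euc n}

lemma simpleRefl_inv (i : Fin n) : (simpleRefl α i)⁻¹ = simpleRefl α i :=
  reflection_inv

lemma reflGroup_le_closure_reflections (hα : ∀ i, α i ≠ 0) :
    (reflGroup α).toSubmonoid ≤ Submonoid.closure (reflections α) := by
  have hS : Set.range (simpleRefl α) ⊆ reflections α := by
    rintro _ ⟨i, rfl⟩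
    exact ⟨Subgroup.subset_closure ⟨i, rfl⟩, α i, hα i, rfl⟩
  rw [reflGroup, Subgroup.closure_toSubmonoid]
  refine Submonoid.closure_mono (Set.union_subset hS fun g hg => ?_)
  obtain ⟨i, hi⟩ := Set.mem_inv.mp hg
  exact hS ⟨i, by rw [← simpleRefl_inv, hi, inv_inv]⟩

lemma finrank_movedSpace_le_reflLength_of_mem (hα : ∀ i, α i ≠ 0)
    {g : Euc n ≃ₗᵢ[ℝ] Euc n} (hg : g ∈ reflGroup α) :
    finrank ℝ (movedSpace g) ≤ reflLength (reflections α) g :=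
  finrank_movedSpace_le_reflLength
    (by rintro _ ⟨-, v, -, rfl⟩; exact finrank_movedSpace_reflection_le v)
    (reflGroup_le_closure_reflections hα hg)

lemma finrank_movedSpace_eq_reflLength_of_reflLe (hα : ∀ i, α i ≠ 0)
    {a b : Euc n ≃ₗᵢ[ℝ] Euc n} (ha : a ∈ reflGroup α) (hb : b ∈ reflGroup α)
    (hab : reflLe (reflections α) a b)
    (hb' : reflLength (reflections α) b ≤ finrank ℝ (movedSpace b)) :
    finrank ℝ (movedSpace a) = reflLength (reflections α) a ∧
      finrank ℝ (movedSpace (a⁻¹ * b)) = reflLength (reflections α) (a⁻¹ * b) := by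
  have hsub := @finrank_movedSpace_mul_le n a (a⁻¹ * b)
  rw [mul_inv_cancel_left] at hsub
  have := finrank_movedSpace_le_reflLength_of_mem hα ha
  have := finrank_movedSpace_le_reflLength_of_mem hα (mul_mem (inv_mem ha) hb)
  unfold reflLe at hab
  omega

lemma fixedSpace_eq_inf_of_reflLe (hα : ∀ i, α i ≠ 0)
    {a b : Euc n ≃ₗᵢ[ℝ] Euc n} (ha : a ∈ reflGroup α) (hb : b ∈ reflGroup α)
    (hab : reflLe (reflections α) a b)
    (hb' : reflLength (reflections α) b ≤ finrank ℝ (movedSpace b)) :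
    fixedSpace b = fixedSpace a ⊓ fixedSpace (a⁻¹ * b) := by
  obtain ⟨h₁, h₂⟩ := finrank_movedSpace_eq_reflLength_of_reflLe hα ha hb hab hb'
  have h := fixedSpace_mul_eq_inf_of_finrank_le (A := a) (B := a⁻¹ * b)
  rw [mul_inv_cancel_left] at h
  unfold reflLe at hab
  exact h (by omega)

lemma fixedSpace_inv_mul_eq_inf_of_reflLe_reflLe (hα : ∀ i, α i ≠ 0)
    {ρ σ γ : Euc n ≃ₗᵢ[ℝ] Euc n} (hρ : ρ ∈ reflGroup α) (hσ : σ ∈ reflGroup α)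
    (hγ : γ ∈ reflGroup α) (hρσ : reflLe (reflections α) ρ σ)
    (hσγ : reflLe (reflections α) σ γ)
    (hγ' : reflLength (reflections α) γ ≤ finrank ℝ (movedSpace γ)) :
    fixedSpace (ρ⁻¹ * γ) = fixedSpace (ρ⁻¹ * σ) ⊓ fixedSpace (σ⁻¹ * γ) := by
  obtain ⟨hdσ, hdσγ⟩ := finrank_movedSpace_eq_reflLength_of_reflLe hα hσ hγ hσγ hγ'
  obtain ⟨hdρ, hdρσ⟩ := finrank_movedSpace_eq_reflLength_of_reflLe hα hρ hσ hρσ hdσ.ge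
  have hsub := @finrank_movedSpace_mul_le n ρ (ρ⁻¹ * γ)
  rw [mul_inv_cancel_left] at hsub
  have h := fixedSpace_mul_eq_inf_of_finrank_le (A := ρ⁻¹ * σ) (B := σ⁻¹ * γ)
  rw [mul_assoc, mul_inv_cancel_left] at h
  unfold reflLe at hρσ hσγ
  -- `dim M(ρ⁻¹σ) + dim M(σ⁻¹γ) = ℓ(γ) - ℓ(ρ) ≤ dim M(γ) - dim M(ρ) ≤ dim M(ρ⁻¹γ)`
  exact h (by omega)

lemma movedSpace_prod_simpleRefl_le (l : List (Fin n)) :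
    movedSpace (l.map (simpleRefl α)).prod ≤ span ℝ (α '' {i | i ∈ l}) := by
  induction l with
  | nil =>
    rintro _ ⟨x, rfl⟩
    simp
  | cons i t ih =>
    rw [List.map_cons, List.prod_cons]
    refine movedSpace_mul_le.trans (sup_le ?_ (ih.trans (span_mono ?_)))
    · rw [simpleRefl, movedSpace_reflection]
      exact span_mono (by simp)
    · exact Set.image_mono fun j hj => List.mem_cons_of_mem i hj

lemma inner_eq_zero_of_prod_simpleRefl_apply_eq (hli : LinearIndependent ℝ α) {l : List (Fin n)}
    (hl : l.Nodup) {v : Euc n} (hv : (l.map (simpleRefl α)).prod v = v) :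
    ∀ i ∈ l, ⟪α i, v⟫ = 0 := by
  induction l with
  | nil => simp
  | cons i t ih =>
    obtain ⟨hit, ht⟩ := List.nodup_cons.mp hl
    set P := (t.map (simpleRefl α)).prod
    have hPv : P v = simpleRefl α i v := by
      have h : simpleRefl α i (P v) = v := hv
      exact (reflection_reflection _ _).symm.trans (congrArg (simpleRefl α i) h)
    -- `R_i v - v = P v - v` lies in `ℝ ∙ α i ⊓ span (α '' t)`, which is `⊥`
    have hdisj := hli.disjoint_span_image (s := {i}) (t := {j | j ∈ t})
      (Set.disjoint_singleton_left.mpr hit)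
    have hi : simpleRefl α i v = v := by
      rw [← sub_eq_zero, ← mem_bot ℝ, ← hdisj.eq_bot]
      refine ⟨?_, hPv ▸ movedSpace_prod_simpleRefl_le t (apply_sub_mem_movedSpace v)⟩
      rw [Set.image_singleton, ← movedSpace_reflection]
      exact apply_sub_mem_movedSpace v
    have hi' : ⟪α i, v⟫ = 0 := by
      rwa [simpleRefl, reflection_eq_self_iff, mem_orthogonal_singleton_iff_inner_right] at hi
    rintro j (_ | ⟨_, hj⟩)
    · exact hi'
    · exact ih ht (hPv.trans hi) j hj

lemma fixedSpace_coxeterElt (hli : LinearIndependent ℝ α) (hspan : span ℝ (Set.range α) = ⊤) :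
    fixedSpace (coxeterElt α) = ⊥ := by
  refine eq_bot_iff.mpr fun v hv => ?_
  rw [mem_fixedSpace, coxeterElt, List.ofFn_eq_map] at hv
  have hα : ∀ i, ⟪α i, v⟫ = 0 := fun i =>
    inner_eq_zero_of_prod_simpleRefl_apply_eq hli (List.nodup_finRange n) hv i
      (List.mem_finRange i)
  have : span ℝ (Set.range α) ≤ (ℝ ∙ v)ᗮ := by
    rw [span_le]
    rintro _ ⟨i, rfl⟩
    exact mem_orthogonal_singleton_iff_inner_left.mpr (hα i)
  rw [hspan, top_le_iff, orthogonal_eq_top_iff, span_singleton_eq_bot] at this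
  exact this ▸ zero_mem _

lemma finrank_movedSpace_coxeterElt (hli : LinearIndependent ℝ α)
    (hspan : span ℝ (Set.range α) = ⊤) : finrank ℝ (movedSpace (coxeterElt α)) = n := by
  have := @finrank_fixedSpace_add_finrank_movedSpace n (coxeterElt α)
  rwa [fixedSpace_coxeterElt hli hspan, finrank_bot, zero_add] at this

lemma reflLength_coxeterElt_le (hα : ∀ i, α i ≠ 0) :
    reflLength (reflections α) (coxeterElt α) ≤ n := by
  simpa [coxeterElt] using reflLength_list_prod_le (R := reflections α)
    (l := List.ofFn (simpleRefl α)) fun r hr => by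
      obtain ⟨i, rfl⟩ := List.mem_ofFn.mp hr
      exact ⟨Subgroup.subset_closure ⟨i, rfl⟩, α i, hα i, rfl⟩

lemma reflLength_coxeterElt_le_finrank (hli : LinearIndependent ℝ α)
    (hspan : span ℝ (Set.range α) = ⊤) :
    reflLength (reflections α) (coxeterElt α) ≤ finrank ℝ (movedSpace (coxeterElt α)) := by
  rw [finrank_movedSpace_coxeterElt hli hspan]
  exact reflLength_coxeterElt_le hli.ne_zero

lemma coxeterElt_mem_reflGroup : coxeterElt α ∈ reflGroup α :=
  Subgroup.list_prod_mem _ fun _ hx => by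
    obtain ⟨i, rfl⟩ := List.mem_ofFn.mp hx
    exact Subgroup.subset_closure ⟨i, rfl⟩

lemma exists_steinbergRoot_eq_apply [NeZero n] (j : ℕ) :
    ∃ w ∈ reflGroup α, ∃ i, steinbergRoot α j = w (α i) := by
  refine ⟨_, mul_mem (pow_mem coxeterElt_mem_reflGroup (j / n)) ?_, _, rfl⟩
  refine Subgroup.list_prod_mem _ fun x hx => ?_
  obtain ⟨i, rfl⟩ := List.mem_ofFn.mp (List.mem_of_mem_take hx)
  exact Subgroup.subset_closure ⟨i, rfl⟩

lemma reflection_steinbergRoot_mem_reflGroup [NeZero n] (j : ℕ) :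
    reflection (ℝ ∙ steinbergRoot α j)ᗮ ∈ reflGroup α := by
  obtain ⟨w, hw, i, hτ⟩ := exists_steinbergRoot_eq_apply (α := α) j
  rw [hτ, reflection_orthogonal_span_map]
  exact mul_mem (mul_mem hw (Subgroup.subset_closure ⟨i, rfl⟩)) (inv_mem hw)

end RootSystem

theorem projection_mem_fixedSpace_general (n : ℕ) [NeZero n] (α : Fin n → Euc n)
    (hli : LinearIndependent ℝ α)
    (hspan : Submodule.span ℝ (Set.range α) = ⊤)
    (σ : Euc n ≃ₗᵢ[ℝ] Euc n) (hσW : σ ∈ reflGroup α)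
    (hσγ : reflLe (reflections α) σ (coxeterElt α))
    (τ : Euc n) (hτpos : ∃ j, j < n * orderOf (coxeterElt α) / 2 ∧ τ = steinbergRoot α j)
    (hτσ : reflLe (reflections α) (Submodule.reflection (ℝ ∙ τ)ᗮ) σ)
    (μ : Euc n) (hμ : coxeterElt α μ = μ - (2 : ℝ) • τ) :
    Submodule.reflection (ℝ ∙ τ)ᗮ (σ ((Submodule.orthogonalProjectionOnto (movedSpace σ) μ : Euc n))) =
        (Submodule.orthogonalProjectionOnto (movedSpace σ) μ : Euc n) ∧
    σ ((Submodule.orthogonalProjectionOnto (movedSpace σ) μ : Euc n)) =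
        Submodule.reflection (ℝ ∙ τ)ᗮ ((Submodule.orthogonalProjectionOnto (movedSpace σ) μ : Euc n)) ∧
    σ ((Submodule.orthogonalProjectionOnto (movedSpace σ) μ : Euc n)) =
        (Submodule.orthogonalProjectionOnto (movedSpace σ) μ : Euc n) - (2 : ℝ) • τ := by
  obtain ⟨j, -, rfl⟩ := hτpos
  have hα := hli.ne_zero
  have hrW := reflection_steinbergRoot_mem_reflGroup (α := α) j
  have hγ := reflLength_coxeterElt_le_finrank hli hspan
  set γ := coxeterElt α
  set r := reflection (ℝ ∙ steinbergRoot α j)ᗮ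
  have hσ := (finrank_movedSpace_eq_reflLength_of_reflLe hα hσW coxeterElt_mem_reflGroup hσγ hγ).1
  have hFσ := fixedSpace_eq_inf_of_reflLe hα hrW hσW hτσ hσ.ge
  have hFrγ := fixedSpace_inv_mul_eq_inf_of_reflLe_reflLe hα hrW hσW coxeterElt_mem_reflGroup
    hτσ hσγ hγ
  have hμF : μ ∈ fixedSpace (r⁻¹ * γ) := mem_fixedSpace_reflection_inv_mul hμ
  simp only [coe_orthogonalProjectionOnto_apply]
  set μ' := (movedSpace σ).starProjection μ
  have hμ'F : r (σ μ') = μ' := by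
    have := starProjection_movedSpace_mem_fixedSpace (hFσ ▸ inf_le_right) (hFrγ ▸ hμF).1
    rwa [mem_fixedSpace, Submodule.reflection_inv] at this
  have hτM : steinbergRoot α j ∈ movedSpace σ :=
    movedSpace_le_movedSpace_of_fixedSpace_le (hFσ ▸ inf_le_left)
      ((movedSpace_reflection _).symm ▸ mem_span_singleton_self _)
  have hinner := inner_eq_norm_sq_of_norm_sub_two_smul_eq (hμ ▸ γ.norm_map μ)
  have hσμ' : σ μ' = r μ' := (reflection_reflection _ _).symm.trans (congrArg r hμ'F)
  exact ⟨hμ'F, hσμ', hσμ'.trans (reflection_orthogonal_span_starProjection hτM hinner)⟩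

/-- Let `σ ≤ γ` in the reflection-length order, `τ` a positive root with `R(τ) ≤ σ`,
and `μ'(τ)` the orthogonal projection of `μ(τ)` (where `γ μ(τ) = μ(τ) - 2τ`) onto
`M(σ)`. Then `μ'(τ)` lies in the fixed space of `R(τ)σ`, and consequently
`σ(μ'(τ)) = R(τ)(μ'(τ)) = μ'(τ) - 2τ`. -/
theorem projection_mem_fixedSpace (n : ℕ) [NeZero n] (α : Fin n → Euc n)
    (hunit : ∀ i, ‖α i‖ = 1)
    (hli : LinearIndependent ℝ α)
    (hspan : Submodule.span ℝ (Set.range α) = ⊤)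
    (hfin : ((reflGroup α : Set (Euc n ≃ₗᵢ[ℝ] Euc n))).Finite)
    (σ : Euc n ≃ₗᵢ[ℝ] Euc n) (hσW : σ ∈ reflGroup α)
    (hσγ : reflLe (reflections α) σ (coxeterElt α))
    (τ : Euc n) (hτpos : ∃ j, j < n * orderOf (coxeterElt α) / 2 ∧ τ = steinbergRoot α j)
    (hτσ : reflLe (reflections α) (Submodule.reflection (ℝ ∙ τ)ᗮ) σ)
    (μ : Euc n) (hμ : coxeterElt α μ = μ - (2 : ℝ) • τ) :
    Submodule.reflection (ℝ ∙ τ)ᗮ (σ ((Submodule.orthogonalProjectionOnto (movedSpace σ) μ : Euc n))) =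
        (Submodule.orthogonalProjectionOnto (movedSpace σ) μ : Euc n) ∧
    σ ((Submodule.orthogonalProjectionOnto (movedSpace σ) μ : Euc n)) =
        Submodule.reflection (ℝ ∙ τ)ᗮ ((Submodule.orthogonalProjectionOnto (movedSpace σ) μ : Euc n)) ∧
    σ ((Submodule.orthogonalProjectionOnto (movedSpace σ) μ : Euc n)) =
        (Submodule.orthogonalProjectionOnto (movedSpace σ) μ : Euc n) - (2 : ℝ) • τ :=
  projection_mem_fixedSpace_general n α hli hspan σ hσW hσγ τ hτpos hτσ μ hμ
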